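/- arXiv:0904.1984 — 3 statements merged into one kernel-verified Lean document; each statement's English description precedes it below -/
import Mathlib

section
/- Let $n\ge 2$ and $1\le k\le n$ be integers, $h\in\mathbb{R}$, $c<0$, and let $g:(a_1,a_2)\to\mathbb{R}$ be positive, differentiable with $g'(t)\ne 0$ and $(g'(t))^2 = c + g(t)^2\,(h+g(t)^{-n})^2$ for all $t$. Set $\lambda = h+g^{-n}$, $r = g/\sqrt{-c}$, fix $t_0\in(a_1,a_2)$ and let $R(t)=\int_{t_0}^t r(\tau)\lambda(\tau)\,d\tau$. Let $e_{n+1}=(0,\dots,0,1)\in\mathbb{R}^{n+1}$. Then $(r')^2 - r^2\lambda^2 = -1$ on $(a_1,a_2)$, and for every $y\in\mathbb{R}^{n+1}$ with $y_{n+1}=0$ and $\langle y,y\rangle = -1$, the curves $\phi(u) = r(u)\,y + R(u)\,e_{n+1}$ and $\nu(u) = -r(u)\lambda(u)\,y - r'(u)\,e_{n+1}$ satisfy: $\langle\phi',\phi'\rangle\equiv 1$, $\langle\nu,\nu\rangle\equiv -1$, $\langle\nu,\phi'\rangle\equiv 0$, $\langle\nu(u),v\rangle = 0$ for every $v\in\mathbb{R}^{n+1}$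 with $v_{n+1}=0$ and $\langle v,y\rangle = 0$, and $\nu'(u) = -(nh-(n-1)\lambda(u))\,\phi'(u)$ for all $u$. -/
/-- The semi-riemannian bilinear form of index `k` on `ℝ^m`:
`⟨v,w⟩ = -v₁w₁ - ⋯ - v_k w_k + v_{k+1} w_{k+1} + ⋯ + v_m w_m`
(coordinates are 0-indexed in Lean, so the first `k` indices carry sign `-1`). -/
noncomputable def semiForm (k : ℕ) {m : ℕ} (v w : Fin m → ℝ) : ℝ :=
  ∑ i : Fin m, (if (i : ℕ) < k then (-1 : ℝ) else 1) * v i * w i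

/-!
With `ρ = r λ` and `μ = n h - (n - 1) λ`, the ODE for `g` gives `r'² - ρ² = -1`, and the
definition of `λ` gives `ρ' = μ r'`. Differentiating `r'² = ρ² - 1` (legitimate because `r'`
has constant sign by Darboux, so `r' = ±√(ρ² - 1)`) yields `r'' = μ ρ`. Since
`φ' = r' y + ρ e` and `ν = -ρ y - r' e` with `⟨y,y⟩ = -1`, `⟨y,e⟩ = 0`, `⟨e,e⟩ = 1`, all the
claims are then algebra: `ν' = -ρ' y - r'' e = -μ φ'`.
-/

section SemiForm

variable {k m : ℕ}

theorem semiForm_comm (v w : Fin m → ℝ) : semiForm k v w = semiForm k w v :=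
  Finset.sum_congr rfl fun _ _ => by ring

theorem semiForm_smul_add_smul_left (a b : ℝ) (v w x : Fin m → ℝ) :
    semiForm k (a • v + b • w) x = a * semiForm k v x + b * semiForm k w x := by
  simp only [semiForm, Pi.add_apply, Pi.smul_apply, smul_eq_mul, Finset.mul_sum,
    ← Finset.sum_add_distrib]
  exact Finset.sum_congr rfl fun _ _ => by ring

theorem semiForm_smul_add_smul (a b a' b' : ℝ) (v w : Fin m → ℝ) :
    semiForm k (a • v + b • w) (a' • v + b' • w) =
      a * a' * semiForm k v v + (a * b' + b * a') * semiForm k v w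
        + b * b' * semiForm k w w := by
  rw [semiForm_smul_add_smul_left, semiForm_comm v, semiForm_comm w,
    semiForm_smul_add_smul_left, semiForm_smul_add_smul_left, semiForm_comm w v]
  ring

theorem semiForm_single_last {n : ℕ} (hkn : k ≤ n) (x : Fin (n + 1) → ℝ) :
    semiForm k (Pi.single (Fin.last n) 1) x = x (Fin.last n) := by
  rw [semiForm, Finset.sum_eq_single (Fin.last n)]
  · simp [Nat.not_lt.mpr hkn]
  · intro i _ hi
    simp [hi]
  · simp

end SemiForm

theorem hasDerivAt_deriv_of_deriv_sq_eq {f G : ℝ → ℝ} {s : Set ℝ} (hs : IsOpen s)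
    (hs' : Convex ℝ s) (hf : ∀ t ∈ s, DifferentiableAt ℝ f t) (hf' : ∀ t ∈ s, deriv f t ≠ 0)
    (hfG : ∀ t ∈ s, deriv f t ^ 2 = G t) {t G' : ℝ} (ht : t ∈ s) (hG : HasDerivAt G G' t) :
    HasDerivAt (deriv f) (G' / (2 * deriv f t)) t := by
  -- Darboux: `f'` has constant sign on `s`
  obtain ⟨ε, hε, hfε⟩ : ∃ ε : ℝ, ε ^ 2 = 1 ∧ ∀ x ∈ s, deriv f x = ε * √(G x) := by
    rcases hasDerivWithinAt_forall_lt_or_forall_gt_of_forall_ne hs'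
      (fun x hx => (hf x hx).hasDerivAt.hasDerivWithinAt) hf' with hneg | hpos
    · refine ⟨-1, by norm_num, fun x hx => ?_⟩
      rw [← hfG x hx, Real.sqrt_sq_eq_abs, abs_of_neg (hneg x hx)]
      ring
    · refine ⟨1, by norm_num, fun x hx => ?_⟩
      rw [← hfG x hx, Real.sqrt_sq_eq_abs, abs_of_pos (hpos x hx)]
      ring
  have hGt : G t ≠ 0 := hfG t ht ▸ pow_ne_zero 2 (hf' t ht)
  have hsqrt : √(G t) ≠ 0 := Real.sqrt_ne_zero'.mpr ((hfG t ht ▸ sq_nonneg _).lt_of_ne' hGt)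
  refine (((hG.sqrt hGt).const_mul ε).congr_of_eventuallyEq
    (Filter.eventually_of_mem (hs.mem_nhds ht) hfε)).congr_deriv ?_
  have hε0 : ε ≠ 0 := by rintro rfl; norm_num at hε
  rw [hfε t ht]
  field_simp
  linear_combination G' * hε

theorem hasDerivAt_deriv_of_deriv_sq_sub_sq {r ρ μ : ℝ → ℝ} {s : Set ℝ} (hs : IsOpen s)
    (hs' : Convex ℝ s) (hr : ∀ t ∈ s, DifferentiableAt ℝ r t) (hr' : ∀ t ∈ s, deriv r t ≠ 0)
    (hρ : ∀ t ∈ s, HasDerivAt ρ (μ t * deriv r t) t)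
    (hunit : ∀ t ∈ s, deriv r t ^ 2 - ρ t ^ 2 = -1) {t : ℝ} (ht : t ∈ s) :
    HasDerivAt (deriv r) (μ t * ρ t) t := by
  refine (hasDerivAt_deriv_of_deriv_sq_eq hs hs' hr hr' (G := fun t => ρ t ^ 2 - 1)
    (fun t ht => by linear_combination hunit t ht) ht
    (((hρ t ht).pow 2).sub_const 1)).congr_deriv ?_
  field_simp [hr' t ht]
  ring

theorem hasDerivAt_integral_of_continuousAt {f : ℝ → ℝ} {s : Set ℝ} (hs : IsOpen s)
    (hs' : Convex ℝ s) (hf : ∀ x ∈ s, ContinuousAt f x) {a b : ℝ} (ha : a ∈ s) (hb : b ∈ s) :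
    HasDerivAt (fun u => ∫ x in a..u, f x) (f b) b :=
  intervalIntegral.integral_hasDerivAt_right
    (ContinuousOn.intervalIntegrable fun x hx =>
      (hf x (hs'.ordConnected.uIcc_subset ha hb hx)).continuousWithinAt)
    (ContinuousAt.stronglyMeasurableAtFilter hs hf b hb) (hf b hb)

theorem hasDerivAt_div_const_mul_add_zpow_neg (n : ℕ) (a h : ℝ) {g : ℝ → ℝ} {g' t : ℝ}
    (hg : HasDerivAt g g' t) (hgt : g t ≠ 0) :
    HasDerivAt (fun x => g x / a * (h + g x ^ (-(n : ℤ))))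
      ((n * h - (n - 1) * (h + g t ^ (-(n : ℤ)))) * (g' / a)) t := by
  have hpow : HasDerivAt (fun x => g x ^ (-(n : ℤ)))
      ((-(n : ℤ) : ℤ) * g t ^ (-(n : ℤ) - 1) * g') t :=
    (hasDerivAt_zpow (-(n : ℤ)) (g t) (Or.inl hgt)).comp t hg
  refine ((hg.div_const a).mul (hpow.const_add h)).congr_deriv ?_
  rw [zpow_sub_one₀ hgt]
  field_simp
  push_cast
  ring

theorem semiForm_curve_normal {k m : ℕ} {r ρ R μ : ℝ → ℝ} {y e : Fin m → ℝ} {u : ℝ}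
    (hyy : semiForm k y y = -1) (hye : semiForm k y e = 0) (hee : semiForm k e e = 1)
    (hr : DifferentiableAt ℝ r u) (hr' : HasDerivAt (deriv r) (μ u * ρ u) u)
    (hρ : HasDerivAt ρ (μ u * deriv r u) u) (hR : HasDerivAt R (ρ u) u)
    (hunit : deriv r u ^ 2 - ρ u ^ 2 = -1) {φ ν : ℝ → Fin m → ℝ}
    (hφ : ∀ t, φ t = r t • y + R t • e) (hν : ∀ t, ν t = (-ρ t) • y - deriv r t • e) :
    semiForm k (deriv φ u) (deriv φ u) = 1 ∧
      semiForm k (ν u) (ν u) = -1 ∧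
      semiForm k (ν u) (deriv φ u) = 0 ∧
      deriv ν u = (-μ u) • deriv φ u := by
  have hφ' : deriv φ u = deriv r u • y + ρ u • e := by
    rw [show φ = fun t => r t • y + R t • e from funext hφ]
    exact (hr.hasDerivAt.smul_const y).add (hR.smul_const e) |>.deriv
  have hν' : HasDerivAt ν ((-(μ u * deriv r u)) • y - (μ u * ρ u) • e) u := by
    rw [show ν = fun t => (-ρ t) • y - deriv r t • e from funext hν]
    exact (hρ.neg.smul_const y).sub (hr'.smul_const e)
  have hνu : ν u = (-ρ u) • y + (-deriv r u) • e := by rw [hν, neg_smul _ e, sub_eq_add_neg]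
  refine ⟨?_, ?_, ?_, ?_⟩
  · rw [hφ', semiForm_smul_add_smul, hyy, hye, hee]
    linear_combination -hunit
  · rw [hνu, semiForm_smul_add_smul, hyy, hye, hee]
    linear_combination hunit
  · rw [hνu, hφ', semiForm_smul_add_smul, hyy, hye, hee]
    ring
  · rw [hν'.deriv, hφ', smul_add, smul_smul, smul_smul, sub_eq_add_neg, ← neg_smul]
    congr 2 <;> ring

/-- Coordinate `n+1` of the paper (1-indexed) is index `n` here. -/
theorem stmt_10_general (n k : ℕ) (hkn : k ≤ n)
    (h c a₁ a₂ t₀ : ℝ) (hc : c < 0) (ht₀ : t₀ ∈ Set.Ioo a₁ a₂)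
    (g lam r R : ℝ → ℝ)
    (hgdiff : ∀ t ∈ Set.Ioo a₁ a₂, DifferentiableAt ℝ g t)
    (hgpos : ∀ t ∈ Set.Ioo a₁ a₂, 0 < g t)
    (hg' : ∀ t ∈ Set.Ioo a₁ a₂, deriv g t ≠ 0)
    (hode : ∀ t ∈ Set.Ioo a₁ a₂,
      deriv g t ^ 2 = c + g t ^ 2 * (h + g t ^ (-(n : ℤ))) ^ 2)
    (hlam : ∀ t, lam t = h + g t ^ (-(n : ℤ)))
    (hr : ∀ t, r t = g t / Real.sqrt (-c))
    (hR : ∀ t, R t = ∫ τ in t₀..t, r τ * lam τ)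
    (e : Fin (n + 1) → ℝ)
    (he : ∀ i, e i = if (i : ℕ) = n then 1 else 0) :
    (∀ t ∈ Set.Ioo a₁ a₂, deriv r t ^ 2 - r t ^ 2 * lam t ^ 2 = -1) ∧
    ∀ y : Fin (n + 1) → ℝ,
      (∀ i : Fin (n + 1), (i : ℕ) = n → y i = 0) →
      semiForm k y y = -1 →
      ∀ φ ν : ℝ → Fin (n + 1) → ℝ,
        (∀ u, φ u = r u • y + R u • e) →
        (∀ u, ν u = (-(r u * lam u)) • y - deriv r u • e) →
        ∀ u ∈ Set.Ioo a₁ a₂,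
          semiForm k (deriv φ u) (deriv φ u) = 1 ∧
          semiForm k (ν u) (ν u) = -1 ∧
          semiForm k (ν u) (deriv φ u) = 0 ∧
          (∀ v : Fin (n + 1) → ℝ,
            (∀ i : Fin (n + 1), (i : ℕ) = n → v i = 0) →
            semiForm k v y = 0 → semiForm k (ν u) v = 0) ∧
          deriv ν u = (-((n : ℝ) * h - ((n : ℝ) - 1) * lam u)) • deriv φ u := by
  have hr' : ∀ t ∈ Set.Ioo a₁ a₂, HasDerivAt r (deriv g t / √(-c)) t := fun t ht =>
    ((hgdiff t ht).hasDerivAt.div_const _).congr_of_eventuallyEq (.of_forall hr)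
  have hρ : ∀ t ∈ Set.Ioo a₁ a₂,
      HasDerivAt (fun x => r x * lam x) ((n * h - (n - 1) * lam t) * deriv r t) t := by
    intro t ht
    have hρg : (fun x => r x * lam x) = fun x => g x / √(-c) * (h + g x ^ (-(n : ℤ))) :=
      funext fun x => by rw [hr, hlam]
    rw [hρg, hlam, (hr' t ht).deriv]
    exact hasDerivAt_div_const_mul_add_zpow_neg n _ h (hgdiff t ht).hasDerivAt (hgpos t ht).ne'
  have hunit : ∀ t ∈ Set.Ioo a₁ a₂, deriv r t ^ 2 - r t ^ 2 * lam t ^ 2 = -1 := by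
    intro t ht
    rw [(hr' t ht).deriv, hr, hlam, div_pow, div_pow, Real.sq_sqrt (neg_pos.mpr hc).le,
      hode t ht]
    field_simp [hc.ne]
    ring
  have hr'0 : ∀ t ∈ Set.Ioo a₁ a₂, deriv r t ≠ 0 := fun t ht =>
    (hr' t ht).deriv ▸ div_ne_zero (hg' t ht) (Real.sqrt_pos.mpr (neg_pos.mpr hc)).ne'
  have hr'' : ∀ t ∈ Set.Ioo a₁ a₂,
      HasDerivAt (deriv r) ((n * h - (n - 1) * lam t) * (r t * lam t)) t :=
    fun t ht => hasDerivAt_deriv_of_deriv_sq_sub_sq isOpen_Ioo (convex_Ioo a₁ a₂)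
      (fun t ht => (hr' t ht).differentiableAt) hr'0 hρ
      (fun t ht => by rw [mul_pow]; exact hunit t ht) ht
  have hR' : ∀ u ∈ Set.Ioo a₁ a₂, HasDerivAt R (r u * lam u) u := fun u hu =>
    (hasDerivAt_integral_of_continuousAt isOpen_Ioo (convex_Ioo a₁ a₂)
      (fun x hx => (hρ x hx).continuousAt) ht₀ hu).congr_of_eventuallyEq (.of_forall hR)
  refine ⟨hunit, fun y hy hyy φ ν hφ hν u hu => ?_⟩
  have he' : e = Pi.single (Fin.last n) 1 :=
    funext fun i => by simp [he, Pi.single_apply, Fin.ext_iff]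
  have hlast : ∀ x, semiForm k e x = x (Fin.last n) := he' ▸ semiForm_single_last hkn
  obtain ⟨hφφ, hνν, hνφ, hν'⟩ := semiForm_curve_normal (μ := fun t => n * h - (n - 1) * lam t)
    hyy (by rw [semiForm_comm, hlast]; exact hy _ rfl) (by rw [hlast, he', Pi.single_eq_same])
    (hr' u hu).differentiableAt (hr'' u hu) (hρ u hu) (hR' u hu)
    (by linear_combination hunit u hu) hφ hν
  refine ⟨hφφ, hνν, hνφ, fun v hv hvy => ?_, hν'⟩
  rw [hν, sub_eq_add_neg, ← neg_smul, semiForm_smul_add_smul_left, semiForm_comm, hvy, hlast,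
    hv _ rfl]
  ring

/-- Theorem 2.24 of the paper (a family of cmc hypersurfaces of `ℝ_k^{n+1}`;
space-like cmc hypersurfaces of the Minkowski space when `k = 1`).
Coordinate `n+1` of the paper (1-indexed) is index `n` here. -/
theorem stmt_10 (n k : ℕ) (hn : 2 ≤ n) (hk1 : 1 ≤ k) (hkn : k ≤ n)
    (h c a₁ a₂ t₀ : ℝ) (hc : c < 0) (ht₀ : t₀ ∈ Set.Ioo a₁ a₂)
    (g lam r R : ℝ → ℝ)
    (hgdiff : ∀ t ∈ Set.Ioo a₁ a₂, DifferentiableAt ℝ g t)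
    (hgpos : ∀ t ∈ Set.Ioo a₁ a₂, 0 < g t)
    (hg' : ∀ t ∈ Set.Ioo a₁ a₂, deriv g t ≠ 0)
    (hode : ∀ t ∈ Set.Ioo a₁ a₂,
      deriv g t ^ 2 = c + g t ^ 2 * (h + g t ^ (-(n : ℤ))) ^ 2)
    (hlam : ∀ t, lam t = h + g t ^ (-(n : ℤ)))
    (hr : ∀ t, r t = g t / Real.sqrt (-c))
    (hR : ∀ t, R t = ∫ τ in t₀..t, r τ * lam τ)
    (e : Fin (n + 1) → ℝ)
    (he : ∀ i, e i = if (i : ℕ) = n then 1 else 0) :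
    (∀ t ∈ Set.Ioo a₁ a₂, deriv r t ^ 2 - r t ^ 2 * lam t ^ 2 = -1) ∧
    ∀ y : Fin (n + 1) → ℝ,
      (∀ i : Fin (n + 1), (i : ℕ) = n → y i = 0) →
      semiForm k y y = -1 →
      ∀ φ ν : ℝ → Fin (n + 1) → ℝ,
        (∀ u, φ u = r u • y + R u • e) →
        (∀ u, ν u = (-(r u * lam u)) • y - deriv r u • e) →
        ∀ u ∈ Set.Ioo a₁ a₂,
          semiForm k (deriv φ u) (deriv φ u) = 1 ∧
          semiForm k (ν u) (ν u) = -1 ∧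
          semiForm k (ν u) (deriv φ u) = 0 ∧
          (∀ v : Fin (n + 1) → ℝ,
            (∀ i : Fin (n + 1), (i : ℕ) = n → v i = 0) →
            semiForm k v y = 0 → semiForm k (ν u) v = 0) ∧
          deriv ν u = (-((n : ℝ) * h - ((n : ℝ) - 1) * lam u)) • deriv φ u :=
  stmt_10_general n k hkn h c a₁ a₂ t₀ hc ht₀ g lam r R hgdiff hgpos hg' hode hlam hr hR e he
end

section
/- Let $n\ge 3$ be an integer and let $h$ satisfy $-1<h<-2\sqrt{n-1}/n$ (so that $h^2n^2-4n+4>0$ and $h^2<1$). Define $\psi:(0,\infty)\to\mathbb{R}$ by $\psi(t) = t^2(h+t^{-n})^2 - t^2$. Then $\psi$ has exactly two critical points on $(0,\infty)$, namely $v_0 = 2^{-1/n}\Big(\frac{h(n-2)+\sqrt{h^2n^2-4n+4}}{h^2-1}\Big)^{1/n}$ and $v_1 = 2^{-1/n}\Big(\frac{h(n-2)-\sqrt{h^2n^2-4n+4}}{h^2-1}\Big)^{1/n}$, and $0<v_0<v_1$. Moreover, $\psi$ is decreasing on $(0,v_0)$, increasing on $(v_0,v_1)$ and decreasing on $(v_1,\infty)$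 (equivalently, for any constant $c$, the function $q_1(t)=c+\psi(t)$ has the same monotonicity pattern). -/
/-!
Put `w = t ^ n`. Then `ψ'(t) = 2 t w⁻² P(w)` with
`P(w) = (h² - 1) w² + (2 - n) h w + (1 - n)`, whose discriminant is `h² n² - 4 n + 4`.
Under the hypotheses on `h` the two roots of `P` are positive, and they are exactly
`v₀ ^ n < v₁ ^ n`. As `h² - 1 < 0` and `t ↦ t ^ n` is increasing, `ψ'` is negative off
`[v₀, v₁]`, positive inside, and vanishes only at `v₀` and `v₁`.
-/

open Set

section SignPattern

variable {f c g : ℝ → ℝ} {v₀ v₁ : ℝ}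

theorem setOf_pos_deriv_eq_zero_of_hasDerivAt_mul_sub_mul_sub (hv₀ : 0 < v₀) (hv : v₀ < v₁)
    (hg : StrictMonoOn g (Ioi 0)) (hc : ∀ t, 0 < t → c t ≠ 0)
    (hf : ∀ t, 0 < t → HasDerivAt f (c t * (g t - g v₀) * (g t - g v₁)) t) :
    {t | 0 < t ∧ deriv f t = 0} = {v₀, v₁} := by
  have hv₁ : 0 < v₁ := hv₀.trans hv
  ext t
  simp only [mem_ofPred_eq, mem_insert_iff, mem_singleton_iff]
  constructor
  · rintro ⟨ht, hderiv⟩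
    rw [(hf t ht).deriv, mul_eq_zero, mul_eq_zero, sub_eq_zero, sub_eq_zero] at hderiv
    rcases hderiv with (hct | hgt) | hgt
    · exact absurd hct (hc t ht)
    · exact .inl (hg.injOn ht hv₀ hgt)
    · exact .inr (hg.injOn ht hv₁ hgt)
  · rintro (rfl | rfl)
    · exact ⟨hv₀, by simp [(hf _ hv₀).deriv]⟩
    · exact ⟨hv₁, by simp [(hf _ hv₁).deriv]⟩

theorem strictAntiOn_Ioc_of_hasDerivAt_mul_sub_mul_sub (hv : v₀ < v₁)
    (hg : StrictMonoOn g (Ioi 0)) (hc : ∀ t, 0 < t → c t < 0)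
    (hf : ∀ t, 0 < t → HasDerivAt f (c t * (g t - g v₀) * (g t - g v₁)) t) :
    StrictAntiOn f (Ioc 0 v₀) := by
  refine strictAntiOn_of_deriv_neg (convex_Ioc 0 v₀)
    (fun t ht => (hf t ht.1).continuousAt.continuousWithinAt) fun t ht => ?_
  rw [interior_Ioc] at ht
  obtain ⟨ht₀, htv₀⟩ := ht
  have hv₀ : 0 < v₀ := ht₀.trans htv₀
  rw [(hf t ht₀).deriv]
  exact mul_neg_of_pos_of_neg
    (mul_pos_of_neg_of_neg (hc t ht₀) (sub_neg.2 (hg ht₀ hv₀ htv₀)))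
    (sub_neg.2 (hg ht₀ (hv₀.trans hv) (htv₀.trans hv)))

theorem strictMonoOn_Icc_of_hasDerivAt_mul_sub_mul_sub (hv₀ : 0 < v₀)
    (hg : StrictMonoOn g (Ioi 0)) (hc : ∀ t, 0 < t → c t < 0)
    (hf : ∀ t, 0 < t → HasDerivAt f (c t * (g t - g v₀) * (g t - g v₁)) t) :
    StrictMonoOn f (Icc v₀ v₁) := by
  refine strictMonoOn_of_deriv_pos (convex_Icc v₀ v₁)
    (fun t ht => (hf t (hv₀.trans_le ht.1)).continuousAt.continuousWithinAt) fun t ht => ?_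
  rw [interior_Icc] at ht
  obtain ⟨hv₀t, htv₁⟩ := ht
  have ht₀ : 0 < t := hv₀.trans hv₀t
  rw [(hf t ht₀).deriv]
  exact mul_pos_of_neg_of_neg
    (mul_neg_of_neg_of_pos (hc t ht₀) (sub_pos.2 (hg hv₀ ht₀ hv₀t)))
    (sub_neg.2 (hg ht₀ (ht₀.trans htv₁) htv₁))

theorem strictAntiOn_Ici_of_hasDerivAt_mul_sub_mul_sub (hv₀ : 0 < v₀) (hv : v₀ < v₁)
    (hg : StrictMonoOn g (Ioi 0)) (hc : ∀ t, 0 < t → c t < 0)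
    (hf : ∀ t, 0 < t → HasDerivAt f (c t * (g t - g v₀) * (g t - g v₁)) t) :
    StrictAntiOn f (Ici v₁) := by
  have hv₁ : 0 < v₁ := hv₀.trans hv
  refine strictAntiOn_of_deriv_neg (convex_Ici v₁)
    (fun t ht => (hf t (hv₁.trans_le ht)).continuousAt.continuousWithinAt) fun t ht => ?_
  rw [interior_Ici] at ht
  have ht₀ : 0 < t := hv₁.trans ht
  rw [(hf t ht₀).deriv]
  exact mul_neg_of_neg_of_pos
    (mul_neg_of_neg_of_pos (hc t ht₀) (sub_pos.2 (hg hv₀ ht₀ (hv.trans ht))))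
    (sub_pos.2 (hg hv₁ ht₀ ht))

end SignPattern

theorem quadratic_eq_mul_sub_mul_sub {K : Type*} [Field K] [NeZero (2 : K)] {a b c s : K}
    (ha : a ≠ 0) (hs : discrim a b c = s * s) (x : K) :
    a * (x * x) + b * x + c = a * (x - (-b + s) / (2 * a)) * (x - (-b - s) / (2 * a)) := by
  rw [discrim] at hs
  field_simp
  linear_combination -hs

noncomputable def psi (n : ℕ) (h t : ℝ) : ℝ := t ^ 2 * (h + t ^ (-(n : ℤ))) ^ 2 - t ^ 2

theorem hasDerivAt_psi (n : ℕ) (h : ℝ) {t : ℝ} (ht : t ≠ 0) :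
    HasDerivAt (psi n h)
      (2 * t / (t ^ n) ^ 2 * ((h ^ 2 - 1) * (t ^ n * t ^ n) + (2 - n) * h * t ^ n + (1 - n)))
      t := by
  have hzpow := ((hasDerivAt_zpow (-(n : ℤ)) t (.inl ht)).const_add h).pow 2
  refine (((hasDerivAt_pow 2 t).mul hzpow).sub (hasDerivAt_pow 2 t)).congr_deriv ?_
  simp only [Pi.pow_apply, zpow_sub_one₀ ht, zpow_neg, zpow_natCast]
  push_cast
  have htn : t ^ n ≠ 0 := pow_ne_zero n ht
  generalize t ^ n = u at htn ⊢
  field_simp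
  ring

theorem psi_numerator_eq_mul_sub_mul_sub {n h s : ℝ} (hh : h ^ 2 ≠ 1)
    (hs : s ^ 2 = h ^ 2 * n ^ 2 - 4 * n + 4) (w : ℝ) :
    (h ^ 2 - 1) * (w * w) + (2 - n) * h * w + (1 - n) =
      (h ^ 2 - 1) * (w - (h * (n - 2) + s) / (h ^ 2 - 1) / 2) *
        (w - (h * (n - 2) - s) / (h ^ 2 - 1) / 2) := by
  have hh' : h ^ 2 - 1 ≠ 0 := sub_ne_zero.2 hh
  have hdiscrim : discrim (h ^ 2 - 1) ((2 - n) * h) (1 - n) = s * s := by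
    rw [discrim]
    linear_combination -hs
  rw [quadratic_eq_mul_sub_mul_sub hh' hdiscrim]
  field_simp
  ring

theorem discrim_pos_of_lt_neg_sqrt {n h : ℝ} (hn : 0 < n) (hh : h < -(2 * √(n - 1) / n)) :
    0 < h ^ 2 * n ^ 2 - 4 * n + 4 := by
  have hsqrt : 2 * √(n - 1) < -h * n := by
    rw [← div_lt_iff₀ hn]
    linarith
  have hpos : 0 < -h * n / 2 := by linarith [Real.sqrt_nonneg (n - 1)]
  have := (Real.sqrt_lt' (x := n - 1) hpos).1 (by linarith)
  nlinarith

theorem psi_numerator_roots_pos_lt {n h s : ℝ} (hn : 2 < n) (hh : h ^ 2 < 1) (hh₀ : h < 0)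
    (hs₀ : 0 < s) (hs : s ^ 2 = h ^ 2 * n ^ 2 - 4 * n + 4) :
    0 < (h * (n - 2) + s) / (h ^ 2 - 1) ∧
      (h * (n - 2) + s) / (h ^ 2 - 1) < (h * (n - 2) - s) / (h ^ 2 - 1) := by
  have hden : h ^ 2 - 1 < 0 := by linarith
  have hs_lt : s < -(h * (n - 2)) := by
    refine (pow_lt_pow_iff_left₀ hs₀.le (by nlinarith) two_ne_zero).1 ?_
    nlinarith [mul_pos (sub_pos.2 hh) (by linarith : (0 : ℝ) < n - 1)]
  exact ⟨div_pos_of_neg_of_neg (by linarith) hden,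
    (div_lt_div_right_of_neg hden).2 (by linarith)⟩

theorem pos_and_pow_eq_of_eq_two_rpow_mul_rpow {n : ℕ} {X v : ℝ} (hn : n ≠ 0) (hX : 0 < X)
    (hv : v = (2 : ℝ) ^ (-(1 : ℝ) / n) * X ^ ((1 : ℝ) / n)) : 0 < v ∧ v ^ n = X / 2 := by
  rw [neg_div, Real.rpow_neg zero_le_two, inv_mul_eq_div, ← Real.div_rpow hX.le zero_le_two,
    one_div] at hv
  subst hv
  exact ⟨Real.rpow_pos_of_pos (by positivity) _, Real.rpow_inv_natCast_pow (by positivity) hn⟩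

/-- From the proof of Theorem 3.1 of the paper: for `-1 < h < -2√(n-1)/n`,
the function `ψ(t) = t²(h + t^{-n})² - t²` has exactly the two critical points
`v₀ < v₁` on `(0, ∞)` given by the stated formulas, and `ψ` is decreasing on
`(0, v₀]`, increasing on `[v₀, v₁]` and decreasing on `[v₁, ∞)`. -/
theorem stmt_14 (n : ℕ) (hn : 3 ≤ n) (h : ℝ)
    (hh1 : -1 < h) (hh2 : h < -(2 * Real.sqrt ((n : ℝ) - 1) / n))
    (ψ : ℝ → ℝ) (hψ : ∀ t, ψ t = t ^ 2 * (h + t ^ (-(n : ℤ))) ^ 2 - t ^ 2)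
    (v₀ v₁ : ℝ)
    (hv₀ : v₀ = (2 : ℝ) ^ (-(1 : ℝ) / (n : ℝ)) *
      ((h * ((n : ℝ) - 2) + Real.sqrt (h ^ 2 * (n : ℝ) ^ 2 - 4 * (n : ℝ) + 4)) /
        (h ^ 2 - 1)) ^ ((1 : ℝ) / (n : ℝ)))
    (hv₁ : v₁ = (2 : ℝ) ^ (-(1 : ℝ) / (n : ℝ)) *
      ((h * ((n : ℝ) - 2) - Real.sqrt (h ^ 2 * (n : ℝ) ^ 2 - 4 * (n : ℝ) + 4)) /
        (h ^ 2 - 1)) ^ ((1 : ℝ) / (n : ℝ))) :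
    0 < v₀ ∧ v₀ < v₁ ∧
    {t : ℝ | 0 < t ∧ deriv ψ t = 0} = {v₀, v₁} ∧
    StrictAntiOn ψ (Set.Ioc 0 v₀) ∧
    StrictMonoOn ψ (Set.Icc v₀ v₁) ∧
    StrictAntiOn ψ (Set.Ici v₁) := by
  have hn₃ : (3 : ℝ) ≤ n := by exact_mod_cast hn
  have hn₀ : n ≠ 0 := by omega
  have hh₀ : h < 0 := hh2.trans_le (neg_nonpos.2 (by positivity))
  have hh : h ^ 2 < 1 := by nlinarith
  have hD := discrim_pos_of_lt_neg_sqrt (by linarith) hh2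
  have hs := Real.sq_sqrt hD.le
  obtain ⟨hX₀, hX₀₁⟩ := psi_numerator_roots_pos_lt (by linarith) hh hh₀ (Real.sqrt_pos.2 hD) hs
  obtain ⟨hv₀pos, hv₀n⟩ := pos_and_pow_eq_of_eq_two_rpow_mul_rpow hn₀ hX₀ hv₀
  obtain ⟨hv₁pos, hv₁n⟩ := pos_and_pow_eq_of_eq_two_rpow_mul_rpow hn₀ (hX₀.trans hX₀₁) hv₁
  have hv₀₁ : v₀ < v₁ := by
    rw [← pow_lt_pow_iff_left₀ hv₀pos.le hv₁pos.le hn₀, hv₀n, hv₁n]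
    linarith
  have hψ' : ∀ t, 0 < t → HasDerivAt ψ
      (2 * t / (t ^ n) ^ 2 * (h ^ 2 - 1) * (t ^ n - v₀ ^ n) * (t ^ n - v₁ ^ n)) t := by
    intro t ht
    rw [funext hψ]
    refine (hasDerivAt_psi n h ht.ne').congr_deriv ?_
    rw [psi_numerator_eq_mul_sub_mul_sub hh.ne hs, hv₀n, hv₁n]
    ring
  have hc : ∀ t : ℝ, 0 < t → 2 * t / (t ^ n) ^ 2 * (h ^ 2 - 1) < 0 :=
    fun t ht => mul_neg_of_pos_of_neg (by positivity) (by linarith)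
  have hg : StrictMonoOn (· ^ n : ℝ → ℝ) (Ioi 0) :=
    (pow_left_strictMonoOn₀ hn₀).mono fun _ ht => le_of_lt (mem_Ioi.1 ht)
  exact ⟨hv₀pos, hv₀₁,
    setOf_pos_deriv_eq_zero_of_hasDerivAt_mul_sub_mul_sub hv₀pos hv₀₁ hg
      (fun t ht => (hc t ht).ne) hψ',
    strictAntiOn_Ioc_of_hasDerivAt_mul_sub_mul_sub hv₀₁ hg hc hψ',
    strictMonoOn_Icc_of_hasDerivAt_mul_sub_mul_sub hv₀pos hg hc hψ',
    strictAntiOn_Ici_of_hasDerivAt_mul_sub_mul_sub hv₀pos hv₀₁ hg hc hψ'⟩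
end

section
/- Let $n\ge 3$ be an integer and let $h$ satisfy $-1<h<-2\sqrt{n-1}/n$. Let $v_1 = 2^{-1/n}\Big(\frac{h(n-2)-\sqrt{h^2n^2-4n+4}}{h^2-1}\Big)^{1/n}$ and define $c_1 = (2-2h^2)^{(n-2)/n}\; n\;\big(-h(n-2)+\sqrt{h^2n^2-4n+4}\big)^{(2-2n)/n}\;\big(h^2n-2-h\sqrt{h^2n^2-4n+4}\big)$. Then: (i) $c_1>0$; (ii) $c_1 - v_1^2 + v_1^2(h+v_1^{-n})^2 = 0$, i.e. with $c=c_1$ the function $q_1(t)=c-t^2+t^2(h+t^{-n})^2$ vanishes at $v_1$; (iii) $\frac{v_1^2}{c_1} = \frac{2+(h^2-2)n+h\sqrt{4+n(h^2n-4)}}{2(h^2-1)n}$, and this quantity is greater than $1$. -/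
/-!
Write `s = √(h²n² - 4n + 4)`, `B = 2 - 2h²`, `C = s - h(n - 2)` and `K = h²n - 2 - hs`, all
positive in the given range of `h`. Then `v₁ⁿ = C / B` and `c₁ = v₁² · BnK / C²`, and everything
follows from two identities: `hC + B = -K`, which holds identically, and `BnK + K² = C²`, which
is `s² = h²n² - 4n + 4`. With them, `q₁(v₁) / v₁² = (BnK + K² - C²) / C² = 0` and
`v₁² / c₁ = C² / (BnK) = 1 + K / (Bn) > 1`.
-/

open Real

theorem four_mul_sub_one_lt_sq_mul_sq {h N : ℝ} (hN : 1 ≤ N)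
    (hh : h < -(2 * √(N - 1) / N)) : 4 * (N - 1) < h ^ 2 * N ^ 2 := by
  have hlt : 2 * √(N - 1) < -(h * N) := by
    have := (div_lt_iff₀ (by linarith : (0 : ℝ) < N)).mp (lt_neg.mp hh)
    linarith
  calc 4 * (N - 1) = (2 * √(N - 1)) ^ 2 := by
        rw [mul_pow, sq_sqrt (by linarith)]; norm_num
    _ < (-(h * N)) ^ 2 := by gcongr
    _ = h ^ 2 * N ^ 2 := by ring

theorem two_rpow_neg_one_div_mul_rpow {x : ℝ} (hx : 0 ≤ x) (N : ℝ) :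
    (2 : ℝ) ^ (-1 / N) * (2 * x) ^ (1 / N) = x ^ (1 / N) := by
  rw [mul_rpow zero_le_two hx, ← mul_assoc, ← rpow_add zero_lt_two, neg_div, neg_add_cancel,
    rpow_zero, one_mul]

theorem rpow_sub_two_div_mul_rpow_two_sub {B C N : ℝ} (hB : 0 < B) (hC : 0 < C) (hN : N ≠ 0) :
    B ^ ((N - 2) / N) * C ^ ((2 - 2 * N) / N) = (C / B) ^ (2 / N) * (B / C ^ 2) := by
  rw [show (N - 2) / N = 1 - 2 / N by field_simp, show (2 - 2 * N) / N = 2 / N - 2 by field_simp,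
    rpow_sub hB, rpow_sub hC, rpow_one, div_rpow hC.le hB.le, rpow_two]
  have := (rpow_pos_of_pos hB (2 / N)).ne'
  field_simp

theorem pos_of_four_mul_sub_one_lt_sq_mul_sq {h N s : ℝ} (hN : 3 ≤ N) (hh1 : -1 < h)
    (hh0 : h < 0) (hE : 4 * (N - 1) < h ^ 2 * N ^ 2) (hs : 0 ≤ s) :
    0 < 2 - 2 * h ^ 2 ∧ 0 < s - h * (N - 2) ∧ 0 < h ^ 2 * N - 2 - h * s := by
  refine ⟨by nlinarith, by nlinarith, ?_⟩
  have h2N : 2 < h ^ 2 * N := by nlinarith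
  nlinarith [mul_nonneg (neg_nonneg.mpr hh0.le) hs]

section Identities

variable {h N B C K : ℝ}

theorem two_sub_two_mul_sq_mul_add_sq_eq_sq {s : ℝ} (hs : s ^ 2 = h ^ 2 * N ^ 2 - 4 * N + 4) :
    (2 - 2 * h ^ 2) * N * (h ^ 2 * N - 2 - h * s) + (h ^ 2 * N - 2 - h * s) ^ 2 =
      (s - h * (N - 2)) ^ 2 := by
  linear_combination (h ^ 2 - 1) * hs

theorem mul_div_sub_add_mul_sq_eq_zero (hC : C ≠ 0) (hlin : h * C + B = -K)
    (hkey : B * N * K + K ^ 2 = C ^ 2) (u : ℝ) :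
    u * (B * N * K / C ^ 2) - u + u * (h + B / C) ^ 2 = 0 := by
  have hsum : h + B / C = -K / C := by
    rw [eq_div_iff hC, ← hlin]; field_simp
  rw [hsum]
  field_simp
  linear_combination u * hkey

theorem sq_div_eq_one_add (hB : B ≠ 0) (hN : N ≠ 0) (hK : K ≠ 0)
    (hkey : B * N * K + K ^ 2 = C ^ 2) : C ^ 2 / (B * N * K) = 1 + K / (B * N) := by
  rw [← hkey]
  field_simp

theorem one_add_div_eq_div_of_sq_sub_one_ne_zero {s : ℝ} (hh : h ^ 2 - 1 ≠ 0) (hN : N ≠ 0) :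
    1 + (h ^ 2 * N - 2 - h * s) / ((2 - 2 * h ^ 2) * N) =
      (2 + (h ^ 2 - 2) * N + h * s) / (2 * (h ^ 2 - 1) * N) := by
  have hB : 2 - 2 * h ^ 2 ≠ 0 := by contrapose! hh; linarith
  rw [one_add_div (mul_ne_zero hB hN), div_eq_div_iff (mul_ne_zero hB hN)
    (mul_ne_zero (mul_ne_zero two_ne_zero hh) hN)]
  ring

end Identities

/-- From the proof of Theorem 3.1 of the paper: for `-1 < h < -2√(n-1)/n`, the
constant `c₁` is positive, `q₁(v₁) = 0` when `c = c₁`, and `v₁²/c₁` equals the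
stated expression, which is greater than `1`. -/
theorem stmt_15 (n : ℕ) (hn : 3 ≤ n) (h : ℝ)
    (hh1 : -1 < h) (hh2 : h < -(2 * Real.sqrt ((n : ℝ) - 1) / n))
    (v₁ c₁ : ℝ)
    (hv₁ : v₁ = (2 : ℝ) ^ (-(1 : ℝ) / (n : ℝ)) *
      ((h * ((n : ℝ) - 2) - Real.sqrt (h ^ 2 * (n : ℝ) ^ 2 - 4 * (n : ℝ) + 4)) /
        (h ^ 2 - 1)) ^ ((1 : ℝ) / (n : ℝ)))
    (hc₁ : c₁ = (2 - 2 * h ^ 2) ^ (((n : ℝ) - 2) / (n : ℝ)) * (n : ℝ) *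
      (-(h * ((n : ℝ) - 2)) + Real.sqrt (h ^ 2 * (n : ℝ) ^ 2 - 4 * (n : ℝ) + 4)) ^
        ((2 - 2 * (n : ℝ)) / (n : ℝ)) *
      (h ^ 2 * (n : ℝ) - 2 - h * Real.sqrt (h ^ 2 * (n : ℝ) ^ 2 - 4 * (n : ℝ) + 4))) :
    0 < c₁ ∧
    c₁ - v₁ ^ 2 + v₁ ^ 2 * (h + v₁ ^ (-(n : ℤ))) ^ 2 = 0 ∧
    v₁ ^ 2 / c₁ =
      (2 + (h ^ 2 - 2) * (n : ℝ) + h * Real.sqrt (4 + (n : ℝ) * (h ^ 2 * (n : ℝ) - 4))) /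
        (2 * (h ^ 2 - 1) * (n : ℝ)) ∧
    1 < v₁ ^ 2 / c₁ := by
  have hN : (3 : ℝ) ≤ n := by exact_mod_cast hn
  set N : ℝ := (n : ℝ)
  have hh0 : h < 0 := hh2.trans_le (neg_nonpos.mpr (by positivity))
  have hE := four_mul_sub_one_lt_sq_mul_sq (by linarith) hh2
  set s := √(h ^ 2 * N ^ 2 - 4 * N + 4)
  have hs2 : s ^ 2 = h ^ 2 * N ^ 2 - 4 * N + 4 := sq_sqrt (by linarith)
  set B := 2 - 2 * h ^ 2
  set C := s - h * (N - 2)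
  set K := h ^ 2 * N - 2 - h * s
  obtain ⟨hB, hC, hK⟩ : 0 < B ∧ 0 < C ∧ 0 < K :=
    pos_of_four_mul_sub_one_lt_sq_mul_sq hN hh1 hh0 hE (sqrt_nonneg _)
  have hkey : B * N * K + K ^ 2 = C ^ 2 := two_sub_two_mul_sq_mul_add_sq_eq_sq hs2
  have hv : v₁ = (C / B) ^ (1 / N) := by
    rw [hv₁, ← two_rpow_neg_one_div_mul_rpow (div_pos hC hB).le]
    have : h ^ 2 - 1 ≠ 0 := by nlinarith
    congr 2
    field_simp
    ring
  have hvn : v₁ ^ (-(n : ℤ)) = B / C := by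
    rw [zpow_neg, zpow_natCast, hv, one_div, rpow_inv_natCast_pow (div_pos hC hB).le (by omega),
      inv_div]
  have hc : c₁ = v₁ ^ 2 * (B * N * K / C ^ 2) := by
    rw [hc₁, neg_add_eq_sub, mul_right_comm _ N, rpow_sub_two_div_mul_rpow_two_sub hB hC
      (by positivity), hv, ← rpow_mul_natCast (div_pos hC hB).le]
    field_simp
    norm_num
  have hratio : v₁ ^ 2 / c₁ = 1 + K / (B * N) := by
    rw [hc, div_mul_cancel_left₀ (by rw [hv]; positivity), inv_div,
      sq_div_eq_one_add hB.ne' (by positivity) hK.ne' hkey]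
  refine ⟨by rw [hc, hv]; positivity, ?_, ?_, ?_⟩
  · rw [hc, hvn]
    exact mul_div_sub_add_mul_sq_eq_zero hC.ne' (by ring) hkey _
  · rw [hratio, show 4 + N * (h ^ 2 * N - 4) = h ^ 2 * N ^ 2 - 4 * N + 4 by ring]
    exact one_add_div_eq_div_of_sq_sub_one_ne_zero (by nlinarith) (by positivity)
  · rw [hratio]
    linarith [div_pos hK (mul_pos hB (by positivity : (0 : ℝ) < N))]
end
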